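/- Isomorphisms in the category of rooted cluster algebras coincide with bijective rooted cluster morphisms: a rooted cluster morphism f : A(Σ₁) → A(Σ₂) is an isomorphism in Clus (i.e. admits a two-sided inverse which is a rooted cluster morphism) if and only if f is bijective as a map. -/

import Mathlib

open scoped BigOperators
open scoped Classical

noncomputable section

universe u v w x₀

/-- A seed in an ambient field `K`: a cluster of elements of `K`, a distinguished subset
of exchangeable variables, and an exchange matrix indexed by `K` (only the entries on
the cluster are relevant). -/
structure Seed (K : Type u) [Field K] : Type u where
  cluster : Set K
  ex : Set K
  ex_subset : ex ⊆ cluster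
  B : K → K → ℤ

/-- Fomin–Zelevinsky matrix mutation in direction `k`. -/
def mutB {I : Type u} (B : I → I → ℤ) (k : I) : I → I → ℤ := fun y z =>
  if y = k ∨ z = k then -B y z
  else B y z + (|B y k| * B k z + B y k * |B k z|) / 2

namespace Seed

variable {K : Type u} {L : Type v} [Field K] [Field L]

/-- Local finiteness of the exchange matrix of a seed. -/
def LocFinite (S : Seed K) : Prop :=
  ∀ y ∈ S.cluster,
    {z | z ∈ S.cluster ∧ S.B y z ≠ 0}.Finite ∧ {z | z ∈ S.cluster ∧ S.B z y ≠ 0}.Finite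

/-- Skew-symmetrisability witnessed by a family `d` of positive integers. -/
def SkewSymmetrizableWith (S : Seed K) (d : K → ℤ) : Prop :=
  (∀ y ∈ S.cluster, 0 < d y) ∧
    ∀ y ∈ S.cluster, ∀ z ∈ S.cluster, d y * S.B y z = -(d z * S.B z y)

def SkewSymmetrizable (S : Seed K) : Prop := ∃ d, S.SkewSymmetrizableWith d

/-- The new cluster variable created by mutation of `S` in direction `x`:
`x * x' = ∏_{b_{xy} > 0} y ^ (b_{xy}) + ∏_{b_{xy} < 0} y ^ (-b_{xy})`. -/
def mutVar (S : Seed K) (x : K) : K :=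
  ((∏ᶠ y ∈ {y | y ∈ S.cluster ∧ 0 < S.B x y}, y ^ (S.B x y).toNat) +
      ∏ᶠ y ∈ {y | y ∈ S.cluster ∧ S.B x y < 0}, y ^ (-S.B x y).toNat) / x

/-- Mutation of a seed in direction `x`. -/
def mutate (S : Seed K) (x : K) : Seed K where
  cluster := insert (S.mutVar x) (S.cluster \ {x})
  ex := insert (S.mutVar x) (S.ex \ {x})
  ex_subset := Set.insert_subset_insert (Set.diff_subset_diff_left S.ex_subset)
  B := fun y z =>
    mutB S.B x (if y = S.mutVar x then x else y) (if z = S.mutVar x then x else z)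

/-- The correspondence `μ_{x,Σ}` on cluster variables. -/
def mutMap (S : Seed K) (x : K) : K → K := fun y => if y = x then S.mutVar x else y

/-- Iterated mutation along a list of directions. -/
def mutateSeq (S : Seed K) : List K → Seed K
  | [] => S
  | y :: l => (S.mutate y).mutateSeq l

/-- A sequence is `Σ`-admissible if each entry is exchangeable in the seed obtained by
mutating along the previous entries. -/
def Admissible (S : Seed K) : List K → Prop
  | [] => True
  | y :: l => y ∈ S.ex ∧ (S.mutate y).Admissible l

/-- The correspondence `μ_{x_n} ∘ ⋯ ∘ μ_{x_1, Σ}` on cluster variables. -/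
def mutSeqMap (S : Seed K) : List K → K → K
  | [] => id
  | y :: l => (S.mutate y).mutSeqMap l ∘ S.mutMap y

/-- The set of all cluster variables of the rooted cluster algebra of `S`. -/
def clusterVars (S : Seed K) : Set K :=
  ⋃ (l : List K) (_ : S.Admissible l), (S.mutateSeq l).cluster

/-- The rooted cluster algebra of `S`, as a subring (ℤ-subalgebra) of the ambient field. -/
def algebra (S : Seed K) : Subring K := Subring.closure S.clusterVars

/-- Equality of seeds (exchange matrices are compared on the cluster only). -/
def SameSeed (S T : Seed K) : Prop :=
  S.cluster = T.cluster ∧ S.ex = T.ex ∧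
    ∀ y ∈ S.cluster, ∀ z ∈ S.cluster, S.B y z = T.B y z

/-- The opposite seed. -/
def op (S : Seed K) : Seed K := ⟨S.cluster, S.ex, S.ex_subset, fun y z => -S.B y z⟩

/-- The simplification of a seed: all exchange matrix entries between pairs of frozen
variables are set to zero. -/
def simplify (S : Seed K) : Seed K :=
  ⟨S.cluster, S.ex, S.ex_subset, fun y z =>
    if y ∈ S.cluster \ S.ex ∧ z ∈ S.cluster \ S.ex then 0 else S.B y z⟩

/-- The full subseed of `S` on a subset `s` of the cluster. -/
def subseed (S : Seed K) (s : Set K) : Seed K :=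
  ⟨s, S.ex ∩ s, Set.inter_subset_right, S.B⟩

/-- The lower bound `ℤ[x \ ex][ex ∪ ex']` of the cluster algebra. -/
def lowerBound (S : Seed K) : Subring K :=
  Subring.closure (S.cluster ∪ ⋃ y ∈ S.ex, (S.mutate y).ex)

/-- The ring of Laurent polynomials `ℤ[x \ ex][e^{±1}]`. -/
def laurentRing (S : Seed K) (e : Set K) : Subring K :=
  Subring.closure ((S.cluster \ S.ex) ∪ e ∪ (fun a => a⁻¹) '' e)

/-- The upper bound `ℤ[x\ex][ex^{±1}] ∩ ⋂_{y ∈ ex} ℤ[x\ex][μ_y(ex)^{±1}]`. -/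
def upperBound (S : Seed K) : Subring K :=
  S.laurentRing S.ex ⊓ ⨅ y ∈ S.ex, S.laurentRing (S.mutate y).ex

end Seed

/-- An isomorphism of seeds along a map `φ` of ambient fields. -/
def SeedIso {K : Type u} {L : Type v} [Field K] [Field L]
    (S : Seed K) (T : Seed L) (φ : K → L) : Prop :=
  Set.BijOn φ S.cluster T.cluster ∧ Set.BijOn φ S.ex T.ex ∧
    ∀ y ∈ S.cluster, ∀ z ∈ S.cluster, T.B (φ y) (φ z) = S.B y z

def IsIsoSeeds {K : Type u} {L : Type v} [Field K] [Field L]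
    (S : Seed K) (T : Seed L) : Prop :=
  ∃ φ : K → L, SeedIso S T φ

/-- A genuine seed: a countable, algebraically independent cluster generating the
ambient field, with a locally finite skew-symmetrisable exchange matrix. -/
structure IsSeed {K : Type u} [Field K] (S : Seed K) : Prop where
  countable : S.cluster.Countable
  free : AlgebraicIndependent ℤ ((↑) : S.cluster → K)
  ambient : Subfield.closure S.cluster = ⊤
  locFin : S.LocFinite
  skew : S.SkewSymmetrizable

/-- The map on ambient fields underlying a ring homomorphism defined on a subring
(extended by zero outside the subring). -/
def subFn {K : Type u} {L : Type v} [Field K] [Field L] {R : Subring K}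
    (f : R →+* L) : K → L :=
  fun a => if h : a ∈ R then f ⟨a, h⟩ else 0

/-- The map on ambient fields underlying a ring homomorphism between rooted cluster
algebras (extended by zero outside of `A(S)`). -/
def mapFn {K : Type u} {L : Type v} [Field K] [Field L] (S : Seed K) {T : Seed L}
    (f : S.algebra →+* T.algebra) : K → L :=
  fun a => if h : a ∈ S.algebra then (f ⟨a, h⟩ : L) else 0

/-- A sequence is biadmissible when it is admissible for the source seed and its image
is admissible for the target seed. -/
def Biadmissible {K : Type u} {L : Type v} [Field K] [Field L]
    (S : Seed K) (T : Seed L) (g : K → L) (l : List K) : Prop :=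
  S.Admissible l ∧ T.Admissible (l.map g)

/-- The rooted cluster morphism conditions (CM1), (CM2), (CM3) for a ring homomorphism
`f : A(S) →+* A(T)`. -/
structure IsRCM {K : Type u} {L : Type v} [Field K] [Field L]
    (S : Seed K) (T : Seed L) (f : S.algebra →+* T.algebra) : Prop where
  cm1 : ∀ y ∈ S.cluster, mapFn S f y ∈ T.cluster ∪ Set.range ((↑) : ℤ → L)
  cm2 : ∀ y ∈ S.ex, mapFn S f y ∈ T.ex ∪ Set.range ((↑) : ℤ → L)
  cm3 : ∀ l : List K, Biadmissible S T (mapFn S f) l → ∀ y ∈ S.cluster,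
    mapFn S f (S.mutSeqMap l y) = T.mutSeqMap (l.map (mapFn S f)) (mapFn S f y)

/-- The image seed `f(Σ) = (x' ∩ f(x), ex' ∩ f(ex), B'[f(x)])` of a morphism. -/
def imageSeed {K : Type u} {L : Type v} [Field K] [Field L] (S : Seed K) {T : Seed L}
    (f : S.algebra →+* T.algebra) : Seed L :=
  ⟨T.cluster ∩ (mapFn S f '' S.cluster), T.ex ∩ (mapFn S f '' S.ex),
    Set.inter_subset_inter T.ex_subset (Set.image_mono (f := mapFn S f) S.ex_subset), T.B⟩

/-- A bundled object of the category of rooted cluster algebras: an ambient field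
together with a seed in it. -/
structure ClusObj : Type (x₀ + 1) where
  carrier : Type x₀
  [fieldStr : Field carrier]
  seed : Seed carrier

attribute [instance] ClusObj.fieldStr

/-- `Δ` separates `s₁` and `s₂` in the seed `S`. -/
def Separates {K : Type u} [Field K] (S : Seed K) (Δ s₁ s₂ : Set K) : Prop :=
  Δ ⊆ S.cluster \ S.ex ∧ S.cluster = s₁ ∪ s₂ ∪ Δ ∧
    Disjoint s₁ s₂ ∧ Disjoint s₁ Δ ∧ Disjoint s₂ Δ ∧
    ∀ y ∈ s₁, ∀ z ∈ s₂, S.B y z = 0 ∧ S.B z y = 0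

/-- Two seeds are glueable along frozen subsets `Δ₁`, `Δ₂` via `φ` when the full
subseeds on `Δ₁` and `Δ₂` are isomorphic along `φ`. -/
def Glueable {K : Type u} {L : Type v} [Field K] [Field L] (S₁ : Seed K) (S₂ : Seed L)
    (Δ₁ : Set K) (Δ₂ : Set L) (φ : K → L) : Prop :=
  Δ₁ ⊆ S₁.cluster \ S₁.ex ∧ Δ₂ ⊆ S₂.cluster \ S₂.ex ∧
    SeedIso (S₁.subseed Δ₁) (S₂.subseed Δ₂) φ

/-- `Sg` is the amalgamated sum of `S₁` and `S₂` along `Δ₁ ≅ Δ₂`, with respect to the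
identifications `e₁`, `e₂` of the ambient variables. -/
structure IsAmalgamatedSum {K : Type u} {L : Type v} {F : Type w}
    [Field K] [Field L] [Field F]
    (S₁ : Seed K) (S₂ : Seed L) (Δ₁ : Set K) (Δ₂ : Set L) (φ : K → L)
    (Sg : Seed F) (e₁ : K → F) (e₂ : L → F) : Prop where
  inj₁ : Set.InjOn e₁ S₁.cluster
  inj₂ : Set.InjOn e₂ S₂.cluster
  compat : ∀ z ∈ Δ₁, e₁ z = e₂ (φ z)
  glueDelta : e₁ '' Δ₁ = e₂ '' Δ₂
  disj₁ : (e₁ '' (S₁.cluster \ Δ₁)) ∩ (e₂ '' S₂.cluster) = ∅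
  disj₂ : (e₂ '' (S₂.cluster \ Δ₂)) ∩ (e₁ '' S₁.cluster) = ∅
  cluster_eq : Sg.cluster = e₁ '' S₁.cluster ∪ e₂ '' S₂.cluster
  ex_eq : Sg.ex = e₁ '' S₁.ex ∪ e₂ '' S₂.ex
  matrix₁ : ∀ y ∈ S₁.cluster, ∀ z ∈ S₁.cluster, Sg.B (e₁ y) (e₁ z) = S₁.B y z
  matrix₂ : ∀ y ∈ S₂.cluster, ∀ z ∈ S₂.cluster, Sg.B (e₂ y) (e₂ z) = S₂.B y z
  matrix₀ : ∀ y ∈ S₁.cluster \ Δ₁, ∀ z ∈ S₂.cluster \ Δ₂,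
    Sg.B (e₁ y) (e₂ z) = 0 ∧ Sg.B (e₂ z) (e₁ y) = 0

namespace Seed

variable {K : Type u} {L : Type v} [Field K] [Field L]

lemma cluster_subset_clusterVars (S : Seed K) : S.cluster ⊆ S.clusterVars := by
  intro y hy
  exact Set.mem_iUnion.2 ⟨[], Set.mem_iUnion.2 ⟨trivial, hy⟩⟩

lemma clusterVars_subset_algebra (S : Seed K) :
    S.clusterVars ⊆ (S.algebra : Set K) := Subring.subset_closure

lemma cluster_subset_algebra (S : Seed K) : S.cluster ⊆ (S.algebra : Set K) :=
  fun _ h => S.clusterVars_subset_algebra (S.cluster_subset_clusterVars h)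

lemma mutateSeq_cluster_subset {S : Seed K} {l : List K} (h : S.Admissible l) :
    (S.mutateSeq l).cluster ⊆ S.clusterVars := by
  intro w hw
  exact Set.mem_iUnion.2 ⟨l, Set.mem_iUnion.2 ⟨h, hw⟩⟩

lemma mutate_clusterVars_subset {S : Seed K} {y : K} (hy : y ∈ S.ex) :
    (S.mutate y).clusterVars ⊆ S.clusterVars := by
  intro w hw
  obtain ⟨l, hl⟩ := Set.mem_iUnion.1 hw
  obtain ⟨ha, hmem⟩ := Set.mem_iUnion.1 hl
  exact Set.mem_iUnion.2 ⟨y :: l, Set.mem_iUnion.2 ⟨⟨hy, ha⟩, hmem⟩⟩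

lemma admissible_mem_clusterVars :
    ∀ (l : List K) (S : Seed K), S.Admissible l → ∀ y ∈ l, y ∈ S.clusterVars := by
  intro l
  induction l with
  | nil => intro S _ y hy; cases hy
  | cons a l ih =>
    intro S hadm y hy
    obtain ⟨ha, hl⟩ := hadm
    rcases List.mem_cons.1 hy with rfl | hy'
    · exact S.cluster_subset_clusterVars (S.ex_subset ha)
    · exact mutate_clusterVars_subset ha (ih (S.mutate a) hl y hy')

lemma mutSeqMap_mem_cluster :
    ∀ (l : List K) (S : Seed K), S.Admissible l → ∀ w ∈ S.cluster,
      S.mutSeqMap l w ∈ (S.mutateSeq l).cluster := by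
  intro l
  induction l with
  | nil => intro S _ w hw; exact hw
  | cons a l ih =>
    intro S hadm w hw
    obtain ⟨ha, hl⟩ := hadm
    have hmm : S.mutMap a w ∈ (S.mutate a).cluster := by
      unfold mutMap mutate
      by_cases hwa : w = a
      · simp [hwa]
      · simp only [if_neg hwa]
        exact Set.mem_insert_of_mem _ ⟨hw, hwa⟩
    exact ih (S.mutate a) hl (S.mutMap a w) hmm

lemma B_self_eq_zero {S : Seed K} (h : S.SkewSymmetrizable) {z : K} (hz : z ∈ S.cluster) :
    S.B z z = 0 := by
  obtain ⟨d, hd1, hd2⟩ := h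
  have h1 := hd2 z hz z hz
  have h2 := hd1 z hz
  nlinarith [h1, h2]

end Seed

section MapFnLemmas

variable {K : Type u} {L : Type v} [Field K] [Field L] {S : Seed K} {T : Seed L}
variable (f : S.algebra →+* T.algebra)

lemma mapFn_apply {a : K} (h : a ∈ S.algebra) : mapFn S f a = (f ⟨a, h⟩ : L) := dif_pos h

lemma mapFn_mem {a : K} (h : a ∈ S.algebra) : mapFn S f a ∈ T.algebra := by
  rw [mapFn_apply f h]; exact (f ⟨a, h⟩).2

lemma mapFn_mul {a b : K} (ha : a ∈ S.algebra) (hb : b ∈ S.algebra) :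
    mapFn S f (a * b) = mapFn S f a * mapFn S f b := by
  rw [mapFn_apply f (mul_mem ha hb), mapFn_apply f ha, mapFn_apply f hb]
  have : (⟨a * b, mul_mem ha hb⟩ : S.algebra) = ⟨a, ha⟩ * ⟨b, hb⟩ := rfl
  rw [this, map_mul]
  rfl

lemma mapFn_add {a b : K} (ha : a ∈ S.algebra) (hb : b ∈ S.algebra) :
    mapFn S f (a + b) = mapFn S f a + mapFn S f b := by
  rw [mapFn_apply f (add_mem ha hb), mapFn_apply f ha, mapFn_apply f hb]
  have : (⟨a + b, add_mem ha hb⟩ : S.algebra) = ⟨a, ha⟩ + ⟨b, hb⟩ := rfl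
  rw [this, map_add]
  rfl

lemma mapFn_pow {a : K} (ha : a ∈ S.algebra) (n : ℕ) :
    mapFn S f (a ^ n) = mapFn S f a ^ n := by
  induction n with
  | zero =>
    simp only [pow_zero]
    rw [mapFn_apply f (one_mem _)]
    have : (⟨(1 : K), one_mem _⟩ : S.algebra) = 1 := rfl
    rw [this, map_one]; rfl
  | succ n ih =>
    rw [pow_succ, pow_succ, mapFn_mul f (pow_mem ha n) ha, ih]

lemma mapFn_finsetProd {ι : Type*} (s : Finset ι) (F : ι → K)
    (h : ∀ i ∈ s, F i ∈ S.algebra) :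
    mapFn S f (∏ i ∈ s, F i) = ∏ i ∈ s, mapFn S f (F i) := by
  classical
  induction s using Finset.cons_induction with
  | empty =>
    simp only [Finset.prod_empty]
    rw [mapFn_apply f (one_mem _)]
    have : (⟨(1 : K), one_mem _⟩ : S.algebra) = 1 := rfl
    rw [this, map_one]; rfl
  | cons a s ha ih =>
    rw [Finset.prod_cons, Finset.prod_cons,
      mapFn_mul f (h a (Finset.mem_cons_self a s))
        (prod_mem fun i hi => h i (Finset.mem_cons_of_mem hi)),
      ih fun i hi => h i (Finset.mem_cons_of_mem hi)]

end MapFnLemmas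

section IsSeedLemmas

variable {K : Type u} [Field K] {S : Seed K}

lemma IsSeed.not_intCast (hS : IsSeed S) {y : K} (hy : y ∈ S.cluster) (n : ℤ) :
    y ≠ (n : K) := by
  intro hyn
  have ht : Transcendental ℤ y := hS.free.transcendental ⟨y, hy⟩
  apply ht
  rw [hyn, ← map_intCast (algebraMap ℤ K) n]
  exact isAlgebraic_algebraMap n

lemma IsSeed.cluster_ne_zero (hS : IsSeed S) {y : K} (hy : y ∈ S.cluster) : y ≠ 0 := by
  simpa using hS.not_intCast hy 0

end IsSeedLemmas
section DomH

open MvPolynomial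

variable {K : Type u} [Field K]

/-- Evaluation of polynomials in the cluster variables inside the ambient field. -/
def psiS (S : Seed K) : MvPolynomial S.cluster ℤ →ₐ[ℤ] K :=
  MvPolynomial.aeval (fun y => (y : K))

/-- Rational "specialisation at `x = 0`, other cluster variables = 1". -/
def phiS (S : Seed K) (x : K) : MvPolynomial S.cluster ℤ →ₐ[ℤ] ℚ :=
  MvPolynomial.aeval (fun y => if (y : K) = x then (0 : ℚ) else 1)

variable {S : Seed K} (hS : IsSeed S) (x : K)

lemma psiS_injective (hS : IsSeed S) : Function.Injective (psiS S) := by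
  have := hS.free
  rwa [algebraicIndependent_iff_injective_aeval] at this

/-- The subset of the ambient field where the specialisation is defined. -/
def DomS (S : Seed K) (x : K) : Set K :=
  {w | ∃ mn : MvPolynomial S.cluster ℤ × MvPolynomial S.cluster ℤ,
    phiS S x mn.2 ≠ 0 ∧ w = psiS S mn.1 / psiS S mn.2}

/-- The specialisation map, extended by zero. -/
def HS (S : Seed K) (x : K) (w : K) : ℚ :=
  if h : w ∈ DomS S x then phiS S x h.choose.1 / phiS S x h.choose.2 else 0

lemma psiS_ne_zero (hS : IsSeed S) {n : MvPolynomial S.cluster ℤ}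
    (hn : phiS S x n ≠ 0) : psiS S n ≠ 0 := by
  intro h0
  apply hn
  have : n = 0 := psiS_injective hS (by simpa using h0)
  simp [this]

lemma HS_spec (hS : IsSeed S) {w : K} (m n : MvPolynomial S.cluster ℤ)
    (hn : phiS S x n ≠ 0) (hw : w = psiS S m / psiS S n) :
    HS S x w = phiS S x m / phiS S x n := by
  have hdom : w ∈ DomS S x := ⟨(m, n), hn, hw⟩
  rw [HS, dif_pos hdom]
  obtain ⟨hc2, hceq⟩ := hdom.choose_spec
  set c := hdom.choose
  have h1 : psiS S c.1 / psiS S c.2 = psiS S m / psiS S n := by rw [← hceq, hw]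
  have hc2' := psiS_ne_zero x hS hc2
  have hn' := psiS_ne_zero x hS hn
  rw [div_eq_div_iff hc2' hn'] at h1
  have : c.1 * n = m * c.2 := psiS_injective hS (by rw [map_mul, map_mul]; exact h1)
  have h2 : phiS S x c.1 * phiS S x n = phiS S x m * phiS S x c.2 := by
    rw [← map_mul, ← map_mul, this]
  rw [div_eq_div_iff hc2 hn]
  exact h2

/-- `DomS` as a subring. -/
def DomSub (S : Seed K) (hS : IsSeed S) (x : K) : Subring K where
  carrier := DomS S x
  one_mem' := ⟨(1, 1), by simp, by simp⟩
  zero_mem' := ⟨(0, 1), by simp, by simp⟩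
  add_mem' := by
    rintro a b ⟨⟨m, n⟩, hn, rfl⟩ ⟨⟨m', n'⟩, hn', rfl⟩
    refine ⟨(m * n' + n * m', n * n'), by simp [hn, hn'], ?_⟩
    rw [map_add, map_mul, map_mul, map_mul]
    rw [div_add_div _ _ (psiS_ne_zero x hS hn) (psiS_ne_zero x hS hn')]
  neg_mem' := by
    rintro a ⟨⟨m, n⟩, hn, rfl⟩
    exact ⟨(-m, n), hn, by rw [map_neg]; ring⟩
  mul_mem' := by
    rintro a b ⟨⟨m, n⟩, hn, rfl⟩ ⟨⟨m', n'⟩, hn', rfl⟩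
    refine ⟨(m * m', n * n'), by simp [hn, hn'], ?_⟩
    rw [map_mul, map_mul]
    ring

variable {x}

lemma HS_mul (hS : IsSeed S) {a b : K} (ha : a ∈ DomS S x) (hb : b ∈ DomS S x) :
    HS S x (a * b) = HS S x a * HS S x b := by
  obtain ⟨⟨m, n⟩, hn, rfl⟩ := ha
  obtain ⟨⟨m', n'⟩, hn', rfl⟩ := hb
  rw [HS_spec x hS m n hn rfl, HS_spec x hS m' n' hn' rfl,
    HS_spec x hS (m * m') (n * n') (by simp [hn, hn'])
      (by rw [map_mul, map_mul]; ring), map_mul, map_mul]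
  ring

lemma HS_add (hS : IsSeed S) {a b : K} (ha : a ∈ DomS S x) (hb : b ∈ DomS S x) :
    HS S x (a + b) = HS S x a + HS S x b := by
  obtain ⟨⟨m, n⟩, hn, rfl⟩ := ha
  obtain ⟨⟨m', n'⟩, hn', rfl⟩ := hb
  rw [HS_spec x hS m n hn rfl, HS_spec x hS m' n' hn' rfl,
    HS_spec x hS (m * n' + n * m') (n * n') (by simp [hn, hn'])
      (by rw [map_add, map_mul, map_mul, map_mul,
        div_add_div _ _ (psiS_ne_zero x hS hn) (psiS_ne_zero x hS hn')]),
    map_add, map_mul, map_mul, map_mul,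
    div_add_div _ _ hn hn']

lemma HS_inv (hS : IsSeed S) {a : K} (ha : a ∈ DomS S x) (h0 : HS S x a ≠ 0) :
    a⁻¹ ∈ DomS S x ∧ HS S x a⁻¹ = (HS S x a)⁻¹ := by
  obtain ⟨⟨m, n⟩, hn, rfl⟩ := ha
  rw [HS_spec x hS m n hn rfl] at h0 ⊢
  have hm : phiS S x m ≠ 0 := fun h => h0 (by simp [h])
  have hinv : (psiS S m / psiS S n)⁻¹ = psiS S n / psiS S m := by
    rw [div_eq_mul_inv, div_eq_mul_inv, mul_inv, inv_inv, mul_comm]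
  exact ⟨⟨(n, m), hm, hinv⟩, by rw [HS_spec x hS n m hm hinv, div_eq_mul_inv,
    div_eq_mul_inv, mul_inv, inv_inv, mul_comm]⟩

lemma HS_pow (hS : IsSeed S) {a : K} (ha : a ∈ DomS S x) (n : ℕ) :
    HS S x (a ^ n) = HS S x a ^ n := by
  induction n with
  | zero =>
    simp only [pow_zero]
    have h1 : (1 : K) ∈ DomS S x := (DomSub S hS x).one_mem
    obtain ⟨⟨m, n⟩, hn, he⟩ := h1
    rw [HS_spec x hS 1 1 (by simp) (by simp)]
    simp
  | succ n ih =>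
    rw [pow_succ, pow_succ,
      HS_mul hS (pow_mem (show a ∈ DomSub S hS x from ha) n) ha, ih]

lemma HS_finsetProd (hS : IsSeed S) {ι : Type*} (s : Finset ι) (F : ι → K)
    (h : ∀ i ∈ s, F i ∈ DomS S x) :
    HS S x (∏ i ∈ s, F i) = ∏ i ∈ s, HS S x (F i) := by
  classical
  induction s using Finset.cons_induction with
  | empty =>
    simp only [Finset.prod_empty]
    rw [HS_spec x hS 1 1 (by simp) (by simp)]
    simp
  | cons a s ha ih =>
    rw [Finset.prod_cons, Finset.prod_cons,
      HS_mul hS (h a (Finset.mem_cons_self a s))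
        (prod_mem (S := DomSub S hS x) fun i hi => h i (Finset.mem_cons_of_mem hi)),
      ih fun i hi => h i (Finset.mem_cons_of_mem hi)]

lemma cluster_mem_DomS {y : K} (hy : y ∈ S.cluster) : y ∈ DomS S x :=
  ⟨(MvPolynomial.X ⟨y, hy⟩, 1), by simp [phiS], by simp [psiS]⟩

lemma HS_cluster (hS : IsSeed S) {y : K} (hy : y ∈ S.cluster) :
    HS S x y = if y = x then 0 else 1 := by
  rw [HS_spec x hS (MvPolynomial.X ⟨y, hy⟩) 1 (by simp [phiS]) (by simp [psiS])]
  simp [phiS]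

end DomH
section Invariant

variable {K : Type u} [Field K]

lemma mutB_ne_left {B : K → K → ℤ} {k a b : K} (h : mutB B k a b ≠ 0) :
    B a b ≠ 0 ∨ B k b ≠ 0 := by
  unfold mutB at h
  by_cases hc : a = k ∨ b = k
  · rw [if_pos hc] at h
    exact Or.inl (by omega)
  · rw [if_neg hc] at h
    by_cases hkb : B k b = 0
    · rw [hkb] at h
      simp at h
      exact Or.inl (by omega)
    · exact Or.inr hkb

lemma mutB_ne_right {B : K → K → ℤ} {k a b : K} (h : mutB B k a b ≠ 0) :
    B a b ≠ 0 ∨ B a k ≠ 0 := by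
  unfold mutB at h
  by_cases hc : a = k ∨ b = k
  · rw [if_pos hc] at h
    exact Or.inl (by omega)
  · rw [if_neg hc] at h
    by_cases hak : B a k = 0
    · rw [hak] at h
      simp at h
      exact Or.inl (by omega)
    · exact Or.inr hak

lemma Seed.LocFinite.mutate {S : Seed K} (h : S.LocFinite) {k : K} (hk : k ∈ S.cluster) :
    (S.mutate k).LocFinite := by
  intro y hy
  set m := S.mutVar k with hm
  have hcl : (S.mutate k).cluster = insert m (S.cluster \ {k}) := rfl
  set u : K := if y = m then k else y with hu
  have humem : u ∈ S.cluster := by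
    rw [hu]
    split
    · exact hk
    · rename_i hne
      rw [hcl] at hy
      rcases Set.mem_insert_iff.1 hy with h1 | h1
      · exact absurd h1 hne
      · exact h1.1
  constructor
  · apply Set.Finite.subset (Set.Finite.insert m
      (((h u humem).1.union (h k hk).1)))
    rintro z ⟨hz1, hz2⟩
    by_cases hzm : z = m
    · exact Set.mem_insert_iff.2 (Or.inl hzm)
    · refine Set.mem_insert_of_mem _ ?_
      have hzc : z ∈ S.cluster := by
        rw [hcl] at hz1
        rcases Set.mem_insert_iff.1 hz1 with h1 | h1
        · exact absurd h1 hzm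
        · exact h1.1
      have : (S.mutate k).B y z = mutB S.B k u z := by
        show mutB S.B k (if y = m then k else y) (if z = m then k else z) = _
        rw [if_neg hzm]
      rw [this] at hz2
      rcases mutB_ne_left hz2 with h1 | h1
      · exact Or.inl ⟨hzc, h1⟩
      · exact Or.inr ⟨hzc, h1⟩
  · apply Set.Finite.subset (Set.Finite.insert m
      (((h u humem).2.union (h k hk).2)))
    rintro z ⟨hz1, hz2⟩
    by_cases hzm : z = m
    · exact Set.mem_insert_iff.2 (Or.inl hzm)
    · refine Set.mem_insert_of_mem _ ?_
      have hzc : z ∈ S.cluster := by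
        rw [hcl] at hz1
        rcases Set.mem_insert_iff.1 hz1 with h1 | h1
        · exact absurd h1 hzm
        · exact h1.1
      have : (S.mutate k).B z y = mutB S.B k z u := by
        show mutB S.B k (if z = m then k else z) (if y = m then k else y) = _
        rw [if_neg hzm]
      rw [this] at hz2
      rcases mutB_ne_right hz2 with h1 | h1
      · exact Or.inl ⟨hzc, h1⟩
      · exact Or.inr ⟨hzc, h1⟩

/-- The invariant carried along admissible mutation sequences: the distinguished frozen
variable `x` stays frozen, the cluster stays inside the specialisation domain, and all
cluster variables other than `x` have positive specialisation. -/
structure CInv (S : Seed K) (x : K) (Z : Seed K) : Prop where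
  subDom : Z.cluster ⊆ DomS S x
  xmem : x ∈ Z.cluster
  xnex : x ∉ Z.ex
  pos : ∀ w ∈ Z.cluster, w ≠ x → 0 < HS S x w
  locFin : Z.LocFinite

variable {S : Seed K} {x : K}

lemma HS_nonneg_cluster (hS : IsSeed S) (hx : x ∈ S.cluster) {Z : Seed K} (hI : CInv S x Z) {w : K} (hw : w ∈ Z.cluster) :
    0 ≤ HS S x w := by
  by_cases hwx : w = x
  · subst hwx
    rw [HS_cluster hS hx]
    simp
  · exact le_of_lt (hI.pos w hw hwx)

lemma CInv.mutate (hS : IsSeed S) (hx : x ∈ S.cluster) {Z : Seed K} (hI : CInv S x Z) {k : K} (hk : k ∈ Z.ex) :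
    CInv S x (Z.mutate k) := by
  have hkc : k ∈ Z.cluster := Z.ex_subset hk
  have hkx : k ≠ x := fun h => hI.xnex (h ▸ hk)
  have hkD : k ∈ DomS S x := hI.subDom hkc
  have hHk : 0 < HS S x k := hI.pos k hkc hkx
  -- the two exchange monomials
  set Ap : Set K := {y | y ∈ Z.cluster ∧ 0 < Z.B k y} with hAp
  set Am : Set K := {y | y ∈ Z.cluster ∧ Z.B k y < 0} with hAm
  have finp : Ap.Finite := ((hI.locFin k hkc).1).subset (by rintro y ⟨h1, h2⟩; exact ⟨h1, by omega⟩)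
  have finm : Am.Finite := ((hI.locFin k hkc).1).subset (by rintro y ⟨h1, h2⟩; exact ⟨h1, by omega⟩)
  have hMeq : Z.mutVar k =
      ((∏ y ∈ finp.toFinset, y ^ (Z.B k y).toNat) +
        ∏ y ∈ finm.toFinset, y ^ (-Z.B k y).toNat) / k := by
    rw [Seed.mutVar, finprod_mem_eq_finite_toFinset_prod _ finp,
      finprod_mem_eq_finite_toFinset_prod _ finm]
  set Mp : K := ∏ y ∈ finp.toFinset, y ^ (Z.B k y).toNat with hMp
  set Mm : K := ∏ y ∈ finm.toFinset, y ^ (-Z.B k y).toNat with hMm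
  have hMpD : Mp ∈ DomS S x :=
    prod_mem (S := DomSub S hS x) fun y hy =>
      pow_mem (show (y : K) ∈ DomSub S hS x from hI.subDom (finp.mem_toFinset.1 hy).1) _
  have hMmD : Mm ∈ DomS S x :=
    prod_mem (S := DomSub S hS x) fun y hy =>
      pow_mem (show (y : K) ∈ DomSub S hS x from hI.subDom (finm.mem_toFinset.1 hy).1) _
  have hHMp : HS S x Mp = ∏ y ∈ finp.toFinset, HS S x y ^ (Z.B k y).toNat := by
    rw [hMp, HS_finsetProd hS _ _ fun y hy =>
      (show (y : K) ^ (Z.B k y).toNat ∈ DomSub S hS x from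
        pow_mem (show (y : K) ∈ DomSub S hS x from hI.subDom (finp.mem_toFinset.1 hy).1) _)]
    exact Finset.prod_congr rfl fun y hy =>
      HS_pow hS (hI.subDom (finp.mem_toFinset.1 hy).1) _
  have hHMm : HS S x Mm = ∏ y ∈ finm.toFinset, HS S x y ^ (-Z.B k y).toNat := by
    rw [hMm, HS_finsetProd hS _ _ fun y hy =>
      (show (y : K) ^ (-Z.B k y).toNat ∈ DomSub S hS x from
        pow_mem (show (y : K) ∈ DomSub S hS x from hI.subDom (finm.mem_toFinset.1 hy).1) _)]
    exact Finset.prod_congr rfl fun y hy =>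
      HS_pow hS (hI.subDom (finm.mem_toFinset.1 hy).1) _
  have hMp0 : 0 ≤ HS S x Mp := by
    rw [hHMp]
    exact Finset.prod_nonneg fun y hy =>
      pow_nonneg (HS_nonneg_cluster hS hx hI (finp.mem_toFinset.1 hy).1) _
  have hMm0 : 0 ≤ HS S x Mm := by
    rw [hHMm]
    exact Finset.prod_nonneg fun y hy =>
      pow_nonneg (HS_nonneg_cluster hS hx hI (finm.mem_toFinset.1 hy).1) _
  have hMppos : x ∉ Ap → 0 < HS S x Mp := by
    intro hxA
    rw [hHMp]
    apply Finset.prod_pos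
    intro y hy
    have hyA := finp.mem_toFinset.1 hy
    exact pow_pos (hI.pos y hyA.1 fun h => hxA (h ▸ hyA)) _
  have hMmpos : x ∉ Am → 0 < HS S x Mm := by
    intro hxA
    rw [hHMm]
    apply Finset.prod_pos
    intro y hy
    have hyA := finm.mem_toFinset.1 hy
    exact pow_pos (hI.pos y hyA.1 fun h => hxA (h ▸ hyA)) _
  have hsumpos : 0 < HS S x Mp + HS S x Mm := by
    rcases lt_trichotomy (Z.B k x) 0 with hB | hB | hB
    · have : x ∉ Ap := fun h => absurd h.2 (by omega)
      have := hMppos this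
      linarith
    · have h1 : x ∉ Ap := fun h => absurd h.2 (by omega)
      have := hMppos h1
      linarith
    · have : x ∉ Am := fun h => absurd h.2 (by omega)
      have := hMmpos this
      linarith
  have hsumD : Mp + Mm ∈ DomS S x :=
    add_mem (show Mp ∈ DomSub S hS x from hMpD) (show Mm ∈ DomSub S hS x from hMmD)
  have hHsum : HS S x (Mp + Mm) = HS S x Mp + HS S x Mm := HS_add hS hMpD hMmD
  have hHkne : HS S x k ≠ 0 := ne_of_gt hHk
  obtain ⟨hkiD, hkiH⟩ := HS_inv hS hkD hHkne
  have hmval : Z.mutVar k = (Mp + Mm) * k⁻¹ := by rw [hMeq, div_eq_mul_inv]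
  have hmD : Z.mutVar k ∈ DomS S x := by
    rw [hmval]
    exact mul_mem (show Mp + Mm ∈ DomSub S hS x from hsumD)
      (show k⁻¹ ∈ DomSub S hS x from hkiD)
  have hmH : HS S x (Z.mutVar k) = (HS S x Mp + HS S x Mm) / HS S x k := by
    rw [hmval, HS_mul hS hsumD hkiD, hkiH, hHsum, div_eq_mul_inv]
  have hmpos : 0 < HS S x (Z.mutVar k) := by
    rw [hmH]
    exact div_pos hsumpos hHk
  have hmx : Z.mutVar k ≠ x := by
    intro h
    rw [h, HS_cluster hS hx] at hmpos
    simp at hmpos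
  constructor
  · intro w hw
    rcases Set.mem_insert_iff.1 hw with rfl | hw'
    · exact hmD
    · exact hI.subDom hw'.1
  · exact Set.mem_insert_of_mem _ ⟨hI.xmem, fun h => hkx (h.symm ▸ rfl)⟩
  · intro h
    rcases Set.mem_insert_iff.1 h with h1 | h1
    · exact hmx h1.symm
    · exact hI.xnex h1.1
  · intro w hw hwx
    rcases Set.mem_insert_iff.1 hw with rfl | hw'
    · exact hmpos
    · exact hI.pos w hw'.1 hwx
  · exact hI.locFin.mutate hkc

lemma CInv.mutateSeq (hS : IsSeed S) (hx : x ∈ S.cluster) :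
    ∀ (l : List K) (Z : Seed K), CInv S x Z → Z.Admissible l → CInv S x (Z.mutateSeq l) := by
  intro l
  induction l with
  | nil => intro Z hI _; exact hI
  | cons a l ih =>
    intro Z hI hadm
    exact ih (Z.mutate a) (hI.mutate hS hx hadm.1) hadm.2

lemma CInv.root (hS : IsSeed S) (hx : x ∈ S.cluster) (hxex : x ∉ S.ex) : CInv S x S where
  subDom := fun y hy => cluster_mem_DomS hy
  xmem := hx
  xnex := hxex
  pos := fun w hw hwx => by rw [HS_cluster hS hw, if_neg hwx]; norm_num
  locFin := hS.locFin

lemma clusterVars_subset_DomS (hS : IsSeed S) (hx : x ∈ S.cluster) (hxex : x ∉ S.ex) : S.clusterVars ⊆ DomS S x := by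
  intro w hw
  obtain ⟨l, hl⟩ := Set.mem_iUnion.1 hw
  obtain ⟨ha, hmem⟩ := Set.mem_iUnion.1 hl
  exact (CInv.mutateSeq hS hx l S (CInv.root hS hx hxex) ha).subDom hmem

lemma algebra_le_DomSub (hS : IsSeed S) (hx : x ∈ S.cluster) (hxex : x ∉ S.ex) : S.algebra ≤ DomSub S hS x :=
  Subring.closure_le.2 (clusterVars_subset_DomS hS hx hxex)

end Invariant
section Inverse

variable {K : Type u} {L : Type v} [Field K] [Field L] {S : Seed K} {T : Seed L}

lemma mapFn_leftInv (f : S.algebra →+* T.algebra) (g : T.algebra →+* S.algebra)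
    (hgf : ∀ w : S.algebra, g (f w) = w) {a : K} (ha : a ∈ S.algebra) :
    mapFn T g (mapFn S f a) = a := by
  rw [mapFn_apply f ha, mapFn_apply g (f ⟨a, ha⟩).2]
  have : (⟨(f ⟨a, ha⟩ : L), (f ⟨a, ha⟩).2⟩ : T.algebra) = f ⟨a, ha⟩ := rfl
  rw [this, hgf]

/-- A bijective rooted cluster morphism cannot send an exchangeable variable of the
target seed to a frozen variable of the source seed. -/
lemma frozen_contra (hS : IsSeed S) (hT : IsSeed T)
    (f : S.algebra →+* T.algebra) (g : T.algebra →+* S.algebra)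
    (hgf : ∀ w : S.algebra, g (f w) = w) (hfg : ∀ w : T.algebra, f (g w) = w)
    (hGc : ∀ w ∈ T.cluster, mapFn T g w ∈ S.cluster)
    {z : L} (hz : z ∈ T.ex) {x : K} (hx : x ∈ S.cluster) (hxex : x ∉ S.ex)
    (hGz : mapFn T g z = x) : False := by
  have hzc : z ∈ T.cluster := T.ex_subset hz
  have hzalg : z ∈ T.algebra := T.cluster_subset_algebra hzc
  have hz0 : z ≠ 0 := hT.cluster_ne_zero hzc
  have hBzz : T.B z z = 0 := Seed.B_self_eq_zero hT.skew hzc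
  -- the exchange relation in `T`
  set Ap : Set L := {y | y ∈ T.cluster ∧ 0 < T.B z y} with hAp
  set Am : Set L := {y | y ∈ T.cluster ∧ T.B z y < 0} with hAm
  have finp : Ap.Finite := ((hT.locFin z hzc).1).subset (by rintro y ⟨h1, h2⟩; exact ⟨h1, by omega⟩)
  have finm : Am.Finite := ((hT.locFin z hzc).1).subset (by rintro y ⟨h1, h2⟩; exact ⟨h1, by omega⟩)
  set Mp : L := ∏ y ∈ finp.toFinset, y ^ (T.B z y).toNat with hMp
  set Mm : L := ∏ y ∈ finm.toFinset, y ^ (-T.B z y).toNat with hMm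
  have hMeq : T.mutVar z = (Mp + Mm) / z := by
    rw [Seed.mutVar, finprod_mem_eq_finite_toFinset_prod _ finp,
      finprod_mem_eq_finite_toFinset_prod _ finm]
  have hrel : z * T.mutVar z = Mp + Mm := by
    rw [hMeq, mul_comm, div_mul_cancel₀ _ hz0]
  -- the new cluster variable lies in the rooted cluster algebra
  have hz'alg : T.mutVar z ∈ T.algebra := by
    apply T.clusterVars_subset_algebra
    apply Seed.mutateSeq_cluster_subset (l := [z]) ⟨hz, trivial⟩
    exact Set.mem_insert _ _
  have hMpalg : Mp ∈ T.algebra :=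
    prod_mem fun y hy => pow_mem (T.cluster_subset_algebra (finp.mem_toFinset.1 hy).1) _
  have hMmalg : Mm ∈ T.algebra :=
    prod_mem fun y hy => pow_mem (T.cluster_subset_algebra (finm.mem_toFinset.1 hy).1) _
  -- transport the exchange relation through `g`
  have hGrel : x * mapFn T g (T.mutVar z) =
      (∏ y ∈ finp.toFinset, mapFn T g y ^ (T.B z y).toNat) +
        ∏ y ∈ finm.toFinset, mapFn T g y ^ (-T.B z y).toNat := by
    have h1 : mapFn T g (z * T.mutVar z) = mapFn T g (Mp + Mm) := by rw [hrel]
    rw [mapFn_mul g hzalg hz'alg, hGz, mapFn_add g hMpalg hMmalg, hMp, hMm,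
      mapFn_finsetProd g _ _ (fun y hy => pow_mem (T.cluster_subset_algebra
        (finp.mem_toFinset.1 hy).1) _),
      mapFn_finsetProd g _ _ (fun y hy => pow_mem (T.cluster_subset_algebra
        (finm.mem_toFinset.1 hy).1) _)] at h1
    rw [h1]
    congr 1
    · exact Finset.prod_congr rfl fun y hy =>
        (mapFn_pow g (T.cluster_subset_algebra (finp.mem_toFinset.1 hy).1) _)
    · exact Finset.prod_congr rfl fun y hy =>
        (mapFn_pow g (T.cluster_subset_algebra (finm.mem_toFinset.1 hy).1) _)
  -- images of the exchange monomial factors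
  have hGy : ∀ y ∈ T.cluster, T.B z y ≠ 0 → mapFn T g y ∈ S.cluster ∧ mapFn T g y ≠ x := by
    intro y hyc hBzy
    refine ⟨hGc y hyc, fun hyx => ?_⟩
    have h1 : mapFn S f (mapFn T g y) = y :=
      mapFn_leftInv g f hfg (T.cluster_subset_algebra hyc)
    have h2 : mapFn S f (mapFn T g z) = z :=
      mapFn_leftInv g f hfg hzalg
    have : y = z := by rw [← h1, ← h2, hyx, hGz]
    rw [this] at hBzy
    exact hBzy hBzz
  -- now specialise
  have haalg : mapFn T g (T.mutVar z) ∈ S.algebra := mapFn_mem g hz'alg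
  have hxD : x ∈ DomS S x := cluster_mem_DomS hx
  have haD : mapFn T g (T.mutVar z) ∈ DomS S x := algebra_le_DomSub hS hx hxex haalg
  have hNp : ∀ y ∈ finp.toFinset, mapFn T g y ^ (T.B z y).toNat ∈ DomS S x := by
    intro y hy
    have hyA := finp.mem_toFinset.1 hy
    exact (show _ ∈ DomSub S hS x from pow_mem (show mapFn T g y ∈ DomSub S hS x from
      cluster_mem_DomS (hGy y hyA.1 (by have := hyA.2; omega)).1) _)
  have hNm : ∀ y ∈ finm.toFinset, mapFn T g y ^ (-T.B z y).toNat ∈ DomS S x := by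
    intro y hy
    have hyA := finm.mem_toFinset.1 hy
    exact (show _ ∈ DomSub S hS x from pow_mem (show mapFn T g y ∈ DomSub S hS x from
      cluster_mem_DomS (hGy y hyA.1 (by have := hyA.2; omega)).1) _)
  have hNpD : (∏ y ∈ finp.toFinset, mapFn T g y ^ (T.B z y).toNat) ∈ DomS S x :=
    prod_mem (S := DomSub S hS x) hNp
  have hNmD : (∏ y ∈ finm.toFinset, mapFn T g y ^ (-T.B z y).toNat) ∈ DomS S x :=
    prod_mem (S := DomSub S hS x) hNm
  have hHeq := congrArg (HS S x) hGrel
  rw [HS_mul hS hxD haD, HS_add hS hNpD hNmD, HS_finsetProd hS _ _ hNp,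
    HS_finsetProd hS _ _ hNm] at hHeq
  have hHx : HS S x x = 0 := by rw [HS_cluster hS hx]; simp
  have hP1 : (∏ y ∈ finp.toFinset, HS S x (mapFn T g y ^ (T.B z y).toNat)) = 1 := by
    apply Finset.prod_eq_one
    intro y hy
    have hyA := finp.mem_toFinset.1 hy
    obtain ⟨hc, hne⟩ := hGy y hyA.1 (by have := hyA.2; omega)
    rw [HS_pow hS (cluster_mem_DomS hc), HS_cluster hS hc, if_neg hne, one_pow]
  have hP2 : (∏ y ∈ finm.toFinset, HS S x (mapFn T g y ^ (-T.B z y).toNat)) = 1 := by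
    apply Finset.prod_eq_one
    intro y hy
    have hyA := finm.mem_toFinset.1 hy
    obtain ⟨hc, hne⟩ := hGy y hyA.1 (by have := hyA.2; omega)
    rw [HS_pow hS (cluster_mem_DomS hc), HS_cluster hS hc, if_neg hne, one_pow]
  rw [hHx, hP1, hP2, zero_mul] at hHeq
  norm_num at hHeq

end Inverse
section Surjectivity

variable {K : Type u} {L : Type v} [Field K] [Field L] {S : Seed K} {T : Seed L}

/-- An injective rooted cluster morphism sends cluster variables to cluster variables. -/
lemma F_cluster_mem (hS : IsSeed S) (f : S.algebra →+* T.algebra) (hf : IsRCM S T f)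
    (hinj : Function.Injective f) {y : K} (hy : y ∈ S.cluster) :
    mapFn S f y ∈ T.cluster := by
  rcases hf.cm1 y hy with h | ⟨n, hn⟩
  · exact h
  have hyalg : y ∈ S.algebra := S.cluster_subset_algebra hy
  exfalso
  apply hS.not_intCast hy n
  have h1 : f ⟨y, hyalg⟩ = (n : T.algebra) := by
    apply Subtype.ext
    rw [show ((f ⟨y, hyalg⟩ : T.algebra) : L) = mapFn S f y from (mapFn_apply f hyalg).symm,
      ← hn]
    simp
  have h2 : f ((n : ℤ) : S.algebra) = ((n : ℤ) : T.algebra) := map_intCast f n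
  have h3 : (⟨y, hyalg⟩ : S.algebra) = ((n : ℤ) : S.algebra) := hinj (h1.trans h2.symm)
  have := congrArg (fun w : S.algebra => (w : K)) h3
  simpa using this

/-- Likewise for exchangeable variables. -/
lemma F_ex_mem (hS : IsSeed S) (f : S.algebra →+* T.algebra) (hf : IsRCM S T f)
    (hinj : Function.Injective f) {y : K} (hy : y ∈ S.ex) :
    mapFn S f y ∈ T.ex := by
  rcases hf.cm2 y hy with h | ⟨n, hn⟩
  · exact h
  have hyc : y ∈ S.cluster := S.ex_subset hy
  have hyalg : y ∈ S.algebra := S.cluster_subset_algebra hyc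
  exfalso
  apply hS.not_intCast hyc n
  have h1 : f ⟨y, hyalg⟩ = (n : T.algebra) := by
    apply Subtype.ext
    rw [show ((f ⟨y, hyalg⟩ : T.algebra) : L) = mapFn S f y from (mapFn_apply f hyalg).symm,
      ← hn]
    simp
  have h2 : f ((n : ℤ) : S.algebra) = ((n : ℤ) : T.algebra) := map_intCast f n
  have h3 : (⟨y, hyalg⟩ : S.algebra) = ((n : ℤ) : S.algebra) := hinj (h1.trans h2.symm)
  have := congrArg (fun w : S.algebra => (w : K)) h3
  simpa using this

lemma F_closure_mem (f : S.algebra →+* T.algebra) {a : K}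
    (ha : a ∈ Subring.closure S.cluster) :
    a ∈ S.algebra ∧ mapFn S f a ∈ Subring.closure (mapFn S f '' S.cluster) := by
  induction ha using Subring.closure_induction with
  | mem w hw =>
    exact ⟨S.cluster_subset_algebra hw, Subring.subset_closure ⟨w, hw, rfl⟩⟩
  | zero =>
    refine ⟨zero_mem _, ?_⟩
    rw [mapFn_apply f (zero_mem _)]
    have : (⟨(0 : K), zero_mem _⟩ : S.algebra) = 0 := rfl
    rw [this, map_zero]
    exact zero_mem _
  | one =>
    refine ⟨one_mem _, ?_⟩
    rw [mapFn_apply f (one_mem _)]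
    have : (⟨(1 : K), one_mem _⟩ : S.algebra) = 1 := rfl
    rw [this, map_one]
    exact one_mem _
  | add w v hw hv ihw ihv =>
    refine ⟨add_mem ihw.1 ihv.1, ?_⟩
    rw [mapFn_add f ihw.1 ihv.1]
    exact add_mem ihw.2 ihv.2
  | neg w hw ihw =>
    obtain ⟨ihw1, ihw2⟩ := ihw
    refine ⟨neg_mem ihw1, ?_⟩
    have hneg : mapFn S f (-w) = -mapFn S f w := by
      have h2 : f ⟨-w, neg_mem ihw1⟩ = - f ⟨w, ihw1⟩ := by
        rw [show (⟨-w, neg_mem ihw1⟩ : S.algebra) = -⟨w, ihw1⟩ from rfl, map_neg]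
      rw [mapFn_apply f (neg_mem ihw1), mapFn_apply f ihw1, h2]
      rfl
    rw [hneg]
    exact neg_mem ihw2
  | mul w v hw hv ihw ihv =>
    refine ⟨mul_mem ihw.1 ihv.1, ?_⟩
    rw [mapFn_mul f ihw.1 ihv.1]
    exact mul_mem ihw.2 ihv.2

/-- A bijective rooted cluster morphism is surjective on cluster variables. -/
lemma F_cluster_surj (hS : IsSeed S) (hT : IsSeed T) (f : S.algebra →+* T.algebra)
    (hf : IsRCM S T f) (hb : Function.Bijective f) {z : L} (hzc : z ∈ T.cluster) :
    ∃ y ∈ S.cluster, mapFn S f y = z := by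
  by_contra hcon
  push_neg at hcon
  set sF : Set L := mapFn S f '' S.cluster with hsF
  have hzF : z ∉ sF := by
    rintro ⟨y, hy, hyz⟩
    exact hcon y hy hyz
  have hsub : sF ⊆ T.cluster := by
    rintro w ⟨y, hy, rfl⟩
    exact F_cluster_mem hS f hf hb.1 hy
  -- find a fraction representation of the preimage of `z`
  have hzalg : z ∈ T.algebra := T.cluster_subset_algebra hzc
  obtain ⟨b, hbz⟩ := hb.2 ⟨z, hzalg⟩
  have hbK : (b : K) ∈ Subfield.closure S.cluster := by
    rw [hS.ambient]; trivial
  obtain ⟨p, hp, q, hq, hpq⟩ := Subfield.mem_closure_iff.1 hbK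
  have hq0 : (q : K) ≠ 0 := by
    intro h0
    rw [h0, div_zero] at hpq
    have hb0 : b = 0 := by
      apply Subtype.ext; exact hpq.symm
    rw [hb0, map_zero] at hbz
    have : z = 0 := by
      have := congrArg (fun w : T.algebra => (w : L)) hbz
      simpa using this.symm
    exact hT.cluster_ne_zero hzc this
  have hpeq : p = (b : K) * q := by
    rw [← hpq, div_mul_cancel₀ _ hq0]
  -- transport to `L`
  obtain ⟨hpalg, hFp⟩ := F_closure_mem f hp
  obtain ⟨hqalg, hFq⟩ := F_closure_mem f hq
  have hFq0 : mapFn S f q ≠ 0 := by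
    rw [mapFn_apply f hqalg]
    intro h0
    have : f ⟨q, hqalg⟩ = 0 := Subtype.ext h0
    have h1 : (⟨q, hqalg⟩ : S.algebra) = 0 := hb.1 (by rw [this, map_zero])
    exact hq0 (congrArg (fun w : S.algebra => (w : K)) h1)
  have hrel : mapFn S f p = z * mapFn S f q := by
    rw [mapFn_apply f hpalg, mapFn_apply f hqalg]
    have h1 : (⟨p, hpalg⟩ : S.algebra) = b * ⟨q, hqalg⟩ := Subtype.ext hpeq
    rw [h1, map_mul, hbz]
    rfl
  -- `z` is algebraic over the adjoin of `sF`
  have hAIins : AlgebraicIndependent ℤ (fun w : (insert z sF : Set L) => (w : L)) :=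
    hT.free.mono (Set.insert_subset hzc hsub)
  have hAIsF : AlgebraicIndependent ℤ (fun w : sF => (w : L)) :=
    hT.free.mono hsub
  have hAIopt : AlgebraicIndependent ℤ (fun o : Option sF => o.elim z (fun w : sF => (w : L))) := by
    let j : Option sF → (insert z sF : Set L) := fun o =>
      o.elim ⟨z, Set.mem_insert _ _⟩ (fun w => ⟨w, Set.mem_insert_of_mem _ w.2⟩)
    have hjinj : Function.Injective j := by
      rintro (_ | w) (_ | w') h
      · rfl
      · exfalso
        have : z = (w' : L) := congrArg (fun t : (insert z sF : Set L) => (t : L)) h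
        exact hzF (this ▸ w'.2)
      · exfalso
        have : (w : L) = z := congrArg (fun t : (insert z sF : Set L) => (t : L)) h
        exact hzF (this ▸ w.2)
      · have : (w : L) = (w' : L) := congrArg (fun t : (insert z sF : Set L) => (t : L)) h
        exact congrArg some (Subtype.ext this)
    have := hAIins.comp j hjinj
    convert this using 1
    funext o
    cases o <;> rfl
  have htrans : Transcendental (Algebra.adjoin ℤ (Set.range ((↑) : sF → L))) z :=
    (hAIsF.option_iff_transcendental z).1 hAIopt
  rw [Subtype.range_coe] at htrans
  apply htrans
  -- build an explicit polynomial
  have hmq : mapFn S f q ∈ Algebra.adjoin ℤ sF := by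
    rw [Algebra.adjoin_int]
    exact hFq
  have hmp : mapFn S f p ∈ Algebra.adjoin ℤ sF := by
    rw [Algebra.adjoin_int]
    exact hFp
  refine ⟨Polynomial.C (⟨mapFn S f q, hmq⟩ : Algebra.adjoin ℤ sF) * Polynomial.X -
    Polynomial.C ⟨mapFn S f p, hmp⟩, ?_, ?_⟩
  · intro h0
    have := congrArg (fun P => Polynomial.coeff P 1) h0
    simp only [Polynomial.coeff_sub, Polynomial.coeff_C_mul, Polynomial.coeff_X_one,
      mul_one, Polynomial.coeff_C, Polynomial.coeff_zero] at this
    norm_num at this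
    exact hFq0 (congrArg (fun w : Algebra.adjoin ℤ sF => (w : L)) this)
  · simp only [map_sub, map_mul, Polynomial.aeval_C, Polynomial.aeval_X]
    show mapFn S f q * z - mapFn S f p = 0
    rw [hrel, mul_comm, sub_self]

end Surjectivity
/-- a rooted cluster morphism is an isomorphism in the category `Clus`
(i.e. admits a two-sided inverse rooted cluster morphism) iff it is bijective. -/
theorem iso_iff_bijective {K : Type u} {L : Type v} [Field K] [Field L]
    (S : Seed K) (T : Seed L) (hS : IsSeed S) (hT : IsSeed T)
    (f : S.algebra →+* T.algebra) (hf : IsRCM S T f) :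
    (∃ g : T.algebra →+* S.algebra, IsRCM T S g ∧
        g.comp f = RingHom.id _ ∧ f.comp g = RingHom.id _) ↔
      Function.Bijective f := by
  constructor
  · rintro ⟨g, _, h1, h2⟩
    constructor
    · intro a b hab
      have ha := RingHom.congr_fun h1 a
      have hb := RingHom.congr_fun h1 b
      simp only [RingHom.coe_comp, Function.comp_apply, RingHom.id_apply] at ha hb
      rw [← ha, ← hb, hab]
    · intro c
      refine ⟨g c, ?_⟩
      have := RingHom.congr_fun h2 c
      simpa using this
  · intro hb
    set e := RingEquiv.ofBijective f hb with he
    set g : T.algebra →+* S.algebra := e.symm.toRingHom with hgdef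
    have hfe : ∀ w : S.algebra, f w = e w := fun w => rfl
    have hgf : ∀ w : S.algebra, g (f w) = w := fun w => by
      rw [hfe w]
      exact e.symm_apply_apply w
    have hfg : ∀ w : T.algebra, f (g w) = w := fun w => by
      have : g w = e.symm w := rfl
      rw [this, hfe (e.symm w)]
      exact e.apply_symm_apply w
    have hGc : ∀ w ∈ T.cluster, mapFn T g w ∈ S.cluster := by
      intro w hw
      obtain ⟨y, hy, hFy⟩ := F_cluster_surj hS hT f hf hb hw
      rw [← hFy, mapFn_leftInv f g hgf (S.cluster_subset_algebra hy)]
      exact hy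
    refine ⟨g, ⟨?_, ?_, ?_⟩, ?_, ?_⟩
    · -- (CM1)
      intro w hw
      exact Set.mem_union_left _ (hGc w hw)
    · -- (CM2)
      intro z hz
      have hc : mapFn T g z ∈ S.cluster := hGc z (T.ex_subset hz)
      by_cases hex : mapFn T g z ∈ S.ex
      · exact Set.mem_union_left _ hex
      · exact (frozen_contra hS hT f g hgf hfg hGc hz hc hex rfl).elim
    · -- (CM3)
      intro l hl y hy
      obtain ⟨hTl, hSl⟩ := hl
      have hentries : ∀ a ∈ l, a ∈ T.algebra := fun a ha =>
        T.clusterVars_subset_algebra (Seed.admissible_mem_clusterVars l T hTl a ha)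
      have hmapid : List.map (mapFn S f) (List.map (mapFn T g) l) = l := by
        rw [List.map_map]
        have h := List.map_congr_left
          (fun a (ha : a ∈ l) => mapFn_leftInv g f hfg (hentries a ha))
        show List.map (fun a => mapFn S f (mapFn T g a)) l = l
        rw [h]
        exact List.map_id l
      have hGy : mapFn T g y ∈ S.cluster := hGc y hy
      have h3 := hf.cm3 (l.map (mapFn T g)) ⟨hSl, by rw [hmapid]; exact hTl⟩
        (mapFn T g y) hGy
      rw [hmapid, mapFn_leftInv g f hfg (T.cluster_subset_algebra hy)] at h3
      have hwalg : S.mutSeqMap (l.map (mapFn T g)) (mapFn T g y) ∈ S.algebra :=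
        S.clusterVars_subset_algebra (Seed.mutateSeq_cluster_subset hSl
          (Seed.mutSeqMap_mem_cluster _ S hSl _ hGy))
      rw [← h3, mapFn_leftInv f g hgf hwalg]
    · ext a
      simpa using hgf a
    · ext a
      simpa using hfg a
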